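/- arXiv:2102.13562 — 4 statements merged into one kernel-verified Lean document; each statement's English description precedes it below -/
import Mathlib

section
/- [Claim 2 in the proof of Lemma 1, via LP duality] Let (λ_s, π_s)_{s∈S} be an optimal splitting of the prior π° ∈ Δ(Ω), let B ⊆ A be nonempty and let ε > 0. If for every α ∈ Δ(B) there exists s ∈ S with u(α, π_s) − ū(π_s) ≥ ε, then there exists μ ∈ Δ(S) such that u(α, Σ_{s∈S} μ_s π_s) ≥ Σ_{s∈S} μ_s ū(π_s) + ε for every α ∈ Δ(B). (Here Δ(B) is identified with the mixed actions in Δ(A) supported on B.) -/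
open Finset

variable {Ω A : Type*}

/-- Expected payoff of mixed action `α` at belief `π` (bilinear extension of `u`). -/
noncomputable def pay [Fintype Ω] [Fintype A] (u : A → Ω → ℝ) (α : A → ℝ) (π : Ω → ℝ) : ℝ :=
  ∑ a, ∑ ω, α a * π ω * u a ω

/-- Expected payoff of pure action `a` at belief `π`. -/
noncomputable def payP [Fintype Ω] (u : A → Ω → ℝ) (a : A) (π : Ω → ℝ) : ℝ :=
  ∑ ω, π ω * u a ω

/-- Pure best replies of the decision-maker at belief `π`. -/
def br [Fintype Ω] (v : A → Ω → ℝ) (π : Ω → ℝ) : Set A :=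
  {a | ∀ a', payP v a' π ≤ payP v a π}

/-- Mixed best replies of the decision-maker at belief `π`. -/
def BR [Fintype Ω] [Fintype A] (v : A → Ω → ℝ) (π : Ω → ℝ) : Set (A → ℝ) :=
  {α ∈ stdSimplex ℝ A | ∀ α' ∈ stdSimplex ℝ A, pay v α' π ≤ pay v α π}

/-- The expert value function `ū(π) = max_{α ∈ BR(π)} u(α, π)`. -/
noncomputable def ubar [Fintype Ω] [Fintype A] (u v : A → Ω → ℝ) (π : Ω → ℝ) : ℝ :=
  sSup ((fun α => pay u α π) '' BR v π)

/-- The decision-maker value function `v̄(π) = max_a v(a, π)`. -/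
noncomputable def vbar [Fintype Ω] [Fintype A] (v : A → Ω → ℝ) (π : Ω → ℝ) : ℝ :=
  ⨆ a, payP v a π

/-- Actions that are a best reply to some belief. -/
def Ahat [Fintype Ω] [Fintype A] (v : A → Ω → ℝ) : Set A :=
  {a | ∃ π ∈ stdSimplex ℝ Ω, a ∈ br v π}

/-- Mixed actions supported on `B`. -/
def simplexOn [Fintype A] (B : Set A) : Set (A → ℝ) :=
  {α | α ∈ stdSimplex ℝ A ∧ ∀ a ∉ B, α a = 0}

/-- `(lam, p)` is a splitting of the prior. -/
def IsSplitting [Fintype Ω] {S : Type*} [Fintype S] (lam : S → ℝ) (p : S → Ω → ℝ)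
    (prior : Ω → ℝ) : Prop :=
  (∀ s, 0 < lam s) ∧ (∑ s, lam s) = 1 ∧ (∀ s, p s ∈ stdSimplex ℝ Ω) ∧
    ∀ ω, (∑ s, lam s * p s ω) = prior ω

/-- `(lam, p)` is an optimal splitting of the prior: it attains `cav ū (prior)`. -/
def IsOptimalSplitting [Fintype Ω] [Fintype A] (u v : A → Ω → ℝ) {S : Type*} [Fintype S]
    (lam : S → ℝ) (p : S → Ω → ℝ) (prior : Ω → ℝ) : Prop :=
  IsSplitting lam p prior ∧
    ∀ (T : Type) [Fintype T] [Nonempty T] (mu : T → ℝ) (q : T → Ω → ℝ),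
      IsSplitting mu q prior →
        (∑ t, mu t * ubar u v (q t)) ≤ ∑ s, lam s * ubar u v (p s)

/-! The vectors `(u(α, π_s))_s`, `α ∈ Δ(B)`, form a convex set `K ⊆ ℝ^S`, the image of `Δ(B)`
under a linear map, and by hypothesis `K` misses the open orthant of points lying strictly below
`b = (ū(π_s) + ε)_s`. A Hahn–Banach functional separating the orthant from `K` has nonnegative
weights, because the orthant is unbounded below in every coordinate, and it is nonzero, so after
normalisation it is a `μ ∈ Δ(S)` with `μ · b ≤ μ · x` on `K`. Bilinearity of `u` turns
`∑ μ_s u(α, π_s)` into `u(α, ∑ μ_s π_s)`. -/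

open Matrix

section

variable {S : Type*} [Fintype S]

lemma exists_nonneg_ne_zero_dotProduct_le {K : Set (S → ℝ)} (hK : Convex ℝ K) (hKne : K.Nonempty)
    {b : S → ℝ} (h : ∀ x ∈ K, ∃ s, b s ≤ x s) :
    ∃ m : S → ℝ, 0 ≤ m ∧ m ≠ 0 ∧ ∀ x ∈ K, m ⬝ᵥ b ≤ m ⬝ᵥ x := by
  classical
  set O : Set (S → ℝ) := Set.univ.pi fun s => Set.Iio (b s)
  have hdisj : Disjoint O K := Set.disjoint_left.2 fun y hy hyK => by
    obtain ⟨s, hs⟩ := h y hyK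
    exact (hy s trivial).not_ge hs
  obtain ⟨f, c, hfO, hfK⟩ := geometric_hahn_banach_open
    (convex_pi fun s _ => convex_Iio (b s)) (isOpen_set_pi Set.finite_univ fun s _ => isOpen_Iio)
    hK hdisj
  set m : S → ℝ := fun s => f (Pi.single s 1)
  have hf : ∀ x, f x = m ⬝ᵥ x := fun x => by
    conv_lhs => rw [← Finset.univ_sum_single x]
    refine (map_sum f _ _).trans (Finset.sum_congr rfl fun s _ => ?_)
    rw [mul_comm, ← smul_eq_mul, ← map_smul, ← Pi.single_smul', smul_eq_mul, mul_one]
  have hle : ∀ y ≤ b, f y ≤ c := by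
    have hclosure : closure O = Set.Iic b := by
      simp only [O, closure_pi_set, closure_Iio]
      ext; simp [Pi.le_def]
    intro y hy
    exact closure_lt_subset_le f.continuous continuous_const
      (closure_mono (fun z hz => hfO z hz) (hclosure ▸ hy))
  refine ⟨m, fun s => ?_, ?_, fun x hx => ?_⟩
  · change 0 ≤ m s
    by_contra! hneg
    set t := (c - f b + 1) / -m s
    have hbt : b - t • Pi.single s 1 ≤ b :=
      sub_le_self _ (smul_nonneg (div_nonneg (by linarith [hle b le_rfl]) (by linarith))
        (Pi.single_nonneg.2 zero_le_one))
    have hft : f b - t * m s ≤ c := by simpa using hle _ hbt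
    have ht : t * m s = -(c - f b + 1) := by
      rw [div_mul_eq_mul_div, div_neg, mul_div_assoc, div_self hneg.ne, mul_one]
    linarith
  · intro hm
    obtain ⟨x, hx⟩ := hKne
    have := (hfO (b - 1) fun s _ => by simp).trans_le (hfK x hx)
    simp [hf, hm] at this
  · rw [← hf, ← hf]
    exact (hle b le_rfl).trans (hfK x hx)

lemma exists_mem_stdSimplex_dotProduct_le [Nonempty S] {K : Set (S → ℝ)} (hK : Convex ℝ K)
    {b : S → ℝ} (h : ∀ x ∈ K, ∃ s, b s ≤ x s) :
    ∃ μ ∈ stdSimplex ℝ S, ∀ x ∈ K, μ ⬝ᵥ b ≤ μ ⬝ᵥ x := by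
  classical
  rcases K.eq_empty_or_nonempty with rfl | hKne
  · inhabit S
    exact ⟨_, single_mem_stdSimplex ℝ default, by simp⟩
  obtain ⟨m, hm0, hm, hmK⟩ := exists_nonneg_ne_zero_dotProduct_le hK hKne h
  have hsum : 0 < ∑ s, m s := by
    obtain ⟨s, hs⟩ := Function.ne_iff.1 hm
    exact (Finset.sum_pos_iff_of_nonneg fun s _ => hm0 s).2 ⟨s, by simp, (hm0 s).lt_of_ne' hs⟩
  refine ⟨(∑ s, m s)⁻¹ • m, ⟨fun s => ?_, ?_⟩, fun x hx => ?_⟩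
  · exact mul_nonneg (inv_nonneg.2 hsum.le) (hm0 s)
  · simp [← Finset.mul_sum, hsum.ne']
  · simp only [smul_dotProduct, smul_eq_mul]
    exact mul_le_mul_of_nonneg_left (hmK x hx) (inv_nonneg.2 hsum.le)

end

lemma pay_eq_sum_payP [Fintype Ω] [Fintype A] (u : A → Ω → ℝ) (α : A → ℝ) (π : Ω → ℝ) :
    pay u α π = ∑ a, α a * payP u a π := by
  simp only [pay, payP, Finset.mul_sum, mul_assoc]

lemma payP_sum_mul {S : Type*} [Fintype Ω] [Fintype S] (u : A → Ω → ℝ) (a : A) (μ : S → ℝ)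
    (p : S → Ω → ℝ) :
    payP u a (fun ω => ∑ s, μ s * p s ω) = ∑ s, μ s * payP u a (p s) := by
  simp only [payP, Finset.sum_mul, Finset.mul_sum, mul_assoc]
  exact Finset.sum_comm

lemma pay_sum_mul {S : Type*} [Fintype Ω] [Fintype A] [Fintype S] (u : A → Ω → ℝ) (α : A → ℝ)
    (μ : S → ℝ) (p : S → Ω → ℝ) :
    pay u α (fun ω => ∑ s, μ s * p s ω) = ∑ s, μ s * pay u α (p s) := by
  simp only [pay_eq_sum_payP, payP_sum_mul, Finset.mul_sum]
  rw [Finset.sum_comm]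
  exact Finset.sum_congr rfl fun _ _ => Finset.sum_congr rfl fun _ _ => by ring

lemma convex_simplexOn [Fintype A] (B : Set A) : Convex ℝ (simplexOn B) := by
  rintro α ⟨hα, hαB⟩ β ⟨hβ, hβB⟩ a b ha hb hab
  exact ⟨convex_stdSimplex ℝ A hα hβ ha hb hab, fun c hc => by simp [hαB c hc, hβB c hc]⟩

theorem claim2_general {Ω A S : Type*} [Fintype Ω] [Fintype A] [Fintype S] [Nonempty S]
    (u v : A → Ω → ℝ) (p : S → Ω → ℝ) (B : Set A) (ε : ℝ)
    (hyp : ∀ α ∈ simplexOn B, ∃ s, ε ≤ pay u α (p s) - ubar u v (p s)) :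
    ∃ μ ∈ stdSimplex ℝ S, ∀ α ∈ simplexOn B,
      (∑ s, μ s * ubar u v (p s)) + ε ≤ pay u α (fun ω => ∑ s, μ s * p s ω) := by
  set M : Matrix S A ℝ := Matrix.of fun s a => payP u a (p s)
  have hM : ∀ α s, (M *ᵥ α) s = pay u α (p s) := fun α s => by
    simp [M, mulVec, dotProduct, pay_eq_sum_payP, mul_comm]
  obtain ⟨μ, hμ, hμK⟩ := exists_mem_stdSimplex_dotProduct_le
    ((convex_simplexOn B).linear_image M.mulVecLin) (b := fun s => ubar u v (p s) + ε) <| by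
      rintro _ ⟨α, hα, rfl⟩
      obtain ⟨s, hs⟩ := hyp α hα
      exact ⟨s, by rw [mulVecLin_apply, hM]; linarith⟩
  refine ⟨μ, hμ, fun α hα => ?_⟩
  calc (∑ s, μ s * ubar u v (p s)) + ε = μ ⬝ᵥ fun s => ubar u v (p s) + ε := by
        simp only [dotProduct, mul_add, Finset.sum_add_distrib, ← Finset.sum_mul, hμ.2, one_mul]
    _ ≤ μ ⬝ᵥ M *ᵥ α := hμK _ ⟨α, hα, rfl⟩
    _ = pay u α (fun ω => ∑ s, μ s * p s ω) := by simp [dotProduct, hM, pay_sum_mul]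

/-- Claim 2 in the proof of Lemma 1, via LP duality. -/
theorem claim2 {Ω A S : Type*} [Fintype Ω] [Nonempty Ω] [Fintype A] [Nonempty A]
    [Fintype S] [Nonempty S] (u v : A → Ω → ℝ) (prior : Ω → ℝ) (hprior : prior ∈ stdSimplex ℝ Ω)
    (lam : S → ℝ) (p : S → Ω → ℝ) (hopt : IsOptimalSplitting u v lam p prior)
    (B : Set A) (hB : B.Nonempty) (ε : ℝ) (hε : 0 < ε)
    (hyp : ∀ α ∈ simplexOn B, ∃ s, ε ≤ pay u α (p s) - ubar u v (p s)) :
    ∃ μ ∈ stdSimplex ℝ S, ∀ α ∈ simplexOn B,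
      (∑ s, μ s * ubar u v (p s)) + ε ≤ pay u α (fun ω => ∑ s, μ s * p s ω) :=
  claim2_general u v p B ε hyp
end

section
/- [Remark 6: pairwise uniform punishment] Let (λ_s, π_s)_{s∈S} be an optimal splitting of the prior π° ∈ Δ(Ω). Then for every pair s, s' ∈ S there exist t ∈ [0,1] and a mixed action α ∈ BR(t·π_s + (1−t)·π_{s'}) such that u(α, π_s) ≤ ū(π_s) and u(α, π_{s'}) ≤ ū(π_{s'}). -/
open Finset

variable {Ω A : Type*}

/-! Optimality of the splitting puts `ū` below the chord between any two posteriors `p s`, `p s'`: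
otherwise pooling a little mass of `s` and `s'` into their mixture would improve the splitting.
Hence along the segment `π_t = t • p s + (1 - t) • p s'` every best reply punishes at `p s` or
at `p s'`, since its payoff at `π_t` is the matching convex combination and is at most `ū(π_t)`.
The parameters admitting a best reply that punishes at `p s` form a closed set containing `1`,
those for `p s'` a closed set containing `0`, and the two cover `[0, 1]`; connectedness gives a
common `t`.
At that `t` the same covering argument, run along the segment between the two best replies
inside the convex set `BR(π_t)`, yields one best reply punishing at both. -/

lemma le_or_le_of_convex_comb_le {t x y X Y : ℝ} (ht : t ∈ Set.Icc (0 : ℝ) 1)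
    (h : t * x + (1 - t) * y ≤ t * X + (1 - t) * Y) : x ≤ X ∨ y ≤ Y := by
  by_contra! hxy
  have ht' : 0 ≤ 1 - t := sub_nonneg.mpr ht.2
  rcases le_total (x - X) (y - Y) with hle | hle
  · nlinarith [mul_nonneg ht' (sub_nonneg.mpr hle)]
  · nlinarith [mul_nonneg ht.1 (sub_nonneg.mpr hle)]

lemma exists_mem_Icc_mem_and_mem_of_Icc_subset_union {F G : Set ℝ} (hF : IsClosed F)
    (hG : IsClosed G) (hcover : Set.Icc (0 : ℝ) 1 ⊆ F ∪ G) (h1 : (1 : ℝ) ∈ F) (h0 : (0 : ℝ) ∈ G) :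
    ∃ t ∈ Set.Icc (0 : ℝ) 1, t ∈ F ∧ t ∈ G := by
  obtain ⟨t, ht, htF, htG⟩ := isPreconnected_closed_iff.mp isPreconnected_Icc F G hF hG hcover
    ⟨1, ⟨zero_le_one, le_rfl⟩, h1⟩ ⟨0, ⟨le_rfl, zero_le_one⟩, h0⟩
  exact ⟨t, ht, htF, htG⟩

section Payoff

variable [Fintype Ω] [Fintype A]

lemma pay_add_smul_left (u : A → Ω → ℝ) (a b : ℝ) (α β : A → ℝ) (π : Ω → ℝ) :
    pay u (a • α + b • β) π = a * pay u α π + b * pay u β π := by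
  simp only [pay, Pi.add_apply, Pi.smul_apply, smul_eq_mul, mul_sum, ← sum_add_distrib]
  exact sum_congr rfl fun _ _ => sum_congr rfl fun _ _ => by ring

lemma pay_add_smul_right (u : A → Ω → ℝ) (α : A → ℝ) (a b : ℝ) (π ρ : Ω → ℝ) :
    pay u α (a • π + b • ρ) = a * pay u α π + b * pay u α ρ := by
  simp only [pay, Pi.add_apply, Pi.smul_apply, smul_eq_mul, mul_sum, ← sum_add_distrib]
  exact sum_congr rfl fun _ _ => sum_congr rfl fun _ _ => by ring

lemma continuous_pay (u : A → Ω → ℝ) :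
    Continuous fun q : (A → ℝ) × (Ω → ℝ) => pay u q.1 q.2 := by
  unfold pay
  fun_prop

variable (u v : A → Ω → ℝ)

lemma isClosed_setOf_mem_BR {X : Type*} [TopologicalSpace X] {π : X → Ω → ℝ}
    (hπ : Continuous π) : IsClosed {q : X × (A → ℝ) | q.2 ∈ BR v (π q.1)} := by
  have hpay : ∀ {f : X × (A → ℝ) → A → ℝ}, Continuous f →
      Continuous fun q => pay v (f q) (π q.1) := fun hf =>
    (continuous_pay v).comp (hf.prodMk (hπ.comp continuous_fst))
  have hset : {q : X × (A → ℝ) | q.2 ∈ BR v (π q.1)} = Prod.snd ⁻¹' stdSimplex ℝ A ∩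
      ⋂ α' ∈ stdSimplex ℝ A, {q | pay v α' (π q.1) ≤ pay v q.2 (π q.1)} := by
    ext q
    simp [BR]
  rw [hset]
  exact ((isClosed_stdSimplex ℝ A).preimage continuous_snd).inter <|
    isClosed_biInter fun α' _ => isClosed_le (hpay continuous_const) (hpay continuous_snd)

lemma isCompact_BR (π : Ω → ℝ) : IsCompact (BR v π) :=
  (isCompact_stdSimplex ℝ A).of_isClosed_subset
    ((isClosed_setOf_mem_BR v (continuous_const : Continuous fun _ : Unit => π)).preimage
      (continuous_const.prodMk continuous_id : Continuous fun α : A → ℝ => ((), α)))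
    fun _ hα => hα.1

lemma BR_nonempty [Nonempty A] (π : Ω → ℝ) : (BR v π).Nonempty := by
  classical
  obtain ⟨α, hα, hmax⟩ := (isCompact_stdSimplex ℝ A).exists_isMaxOn
    ⟨_, single_mem_stdSimplex ℝ (Classical.arbitrary A)⟩
    ((continuous_pay v).comp (continuous_id.prodMk continuous_const)).continuousOn
  exact ⟨α, hα, fun α' hα' => hmax hα'⟩

lemma convex_BR (π : Ω → ℝ) : Convex ℝ (BR v π) := by
  intro α hα β hβ a b ha hb hab
  refine ⟨convex_stdSimplex ℝ A hα.1 hβ.1 ha hb hab, fun α' hα' => ?_⟩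
  rw [pay_add_smul_left]
  calc pay v α' π = a * pay v α' π + b * pay v α' π := by rw [← add_mul, hab, one_mul]
    _ ≤ a * pay v α π + b * pay v β π := by gcongr; exacts [hα.2 α' hα', hβ.2 α' hα']

lemma pay_le_ubar {π : Ω → ℝ} {α : A → ℝ} (hα : α ∈ BR v π) : pay u α π ≤ ubar u v π :=
  le_csSup (((isCompact_BR v π).image
    ((continuous_pay u).comp (continuous_id.prodMk continuous_const))).bddAbove) ⟨α, hα, rfl⟩

end Payoff

section Splitting

variable {S : Type*} [Fintype Ω] [Fintype A] [Fintype S] {u v : A → Ω → ℝ} {lam : S → ℝ}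
  {p : S → Ω → ℝ} {prior : Ω → ℝ}

lemma IsOptimalSplitting.sum_le (hopt : IsOptimalSplitting u v lam p prior) {T : Type*}
    [Fintype T] {mu : T → ℝ} {q : T → Ω → ℝ} (hsplit : IsSplitting mu q prior) :
    ∑ t, mu t * ubar u v (q t) ≤ ∑ s, lam s * ubar u v (p s) := by
  obtain ⟨hpos, hsum, hmem, hbar⟩ := hsplit
  have : Nonempty T := univ_nonempty_iff.mp (nonempty_of_sum_ne_zero (hsum ▸ one_ne_zero))
  let e := (Fintype.equivFin T).symm
  rw [← e.sum_comp]
  refine hopt.2 _ (mu ∘ e) (q ∘ e) ⟨fun _ => hpos _, ?_, fun _ => hmem _, fun ω => ?_⟩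
  · exact (e.sum_comp mu).trans hsum
  · exact (e.sum_comp fun t => mu t * q t ω).trans (hbar ω)

lemma IsSplitting.pool (h : IsSplitting lam p prior) {c : S → ℝ} (hc : c ∈ stdSimplex ℝ S)
    {ε : ℝ} (hε : 0 < ε) (hεc : ∀ x, ε * c x < lam x) :
    IsSplitting (fun o : Option S => o.elim ε fun x => lam x - ε * c x)
      (fun o => o.elim (∑ x, c x • p x) p) prior := by
  obtain ⟨hpos, hsum, hmem, hbar⟩ := h
  refine ⟨?_, ?_, ?_, fun ω => ?_⟩
  · rintro (_ | x)
    exacts [hε, sub_pos.mpr (hεc x)]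
  · simp only [Fintype.sum_option, Option.elim, sum_sub_distrib, ← mul_sum, hsum, hc.2]
    ring
  · rintro (_ | x)
    exacts [(convex_stdSimplex ℝ Ω).sum_mem (fun x _ => hc.1 x) hc.2 fun x _ => hmem x, hmem x]
  · simp only [Fintype.sum_option, Option.elim, Finset.sum_apply, Pi.smul_apply, smul_eq_mul,
      sub_mul, sum_sub_distrib, mul_sum, hbar, mul_assoc]
    ring

lemma IsOptimalSplitting.ubar_sum_smul_le (hopt : IsOptimalSplitting u v lam p prior)
    {c : S → ℝ} (hc : c ∈ stdSimplex ℝ S) :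
    ubar u v (∑ x, c x • p x) ≤ ∑ x, c x * ubar u v (p x) := by
  have : Nonempty S := univ_nonempty_iff.mp (nonempty_of_sum_ne_zero (hc.2 ▸ one_ne_zero))
  obtain ⟨x₀, hx₀⟩ := Finite.exists_min lam
  have hε : 0 < lam x₀ / 2 := half_pos (hopt.1.1 x₀)
  have hεc : ∀ x, lam x₀ / 2 * c x < lam x := fun x =>
    calc lam x₀ / 2 * c x ≤ lam x₀ / 2 :=
          mul_le_of_le_one_right hε.le (mem_Icc_of_mem_stdSimplex hc x).2
      _ < lam x₀ := half_lt_self (hopt.1.1 x₀)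
      _ ≤ lam x := hx₀ x
  have hle := hopt.sum_le (hopt.1.pool hc hε hεc)
  simp only [Fintype.sum_option, Option.elim, sub_mul, sum_sub_distrib, mul_assoc, ← mul_sum]
    at hle
  exact le_of_mul_le_mul_left (by linarith) hε

lemma IsOptimalSplitting.ubar_segment_le (hopt : IsOptimalSplitting u v lam p prior) (s s' : S)
    {t : ℝ} (ht : t ∈ Set.Icc (0 : ℝ) 1) :
    ubar u v (t • p s + (1 - t) • p s') ≤ t * ubar u v (p s) + (1 - t) * ubar u v (p s') := by
  classical
  have hc := convex_stdSimplex ℝ S (single_mem_stdSimplex ℝ s) (single_mem_stdSimplex ℝ s')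
    ht.1 (sub_nonneg.mpr ht.2) (add_sub_cancel t 1)
  simpa [add_smul, mul_smul, sum_add_distrib, add_mul, mul_assoc, Pi.single_apply] using
    hopt.ubar_sum_smul_le hc

end Splitting

section Punishment

variable [Fintype Ω] [Fintype A] (u v : A → Ω → ℝ)

lemma isClosed_setOf_exists_mem_BR_pay_le {X : Type*} [TopologicalSpace X] [T2Space X]
    {K : Set X} (hK : IsCompact K) {π : X → Ω → ℝ} (hπ : Continuous π) (σ : Ω → ℝ) (c : ℝ) :
    IsClosed {x | x ∈ K ∧ ∃ α ∈ BR v (π x), pay u α σ ≤ c} := by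
  have hgraph : IsCompact (K ×ˢ stdSimplex ℝ A ∩
      ({q | q.2 ∈ BR v (π q.1)} ∩ {q | pay u q.2 σ ≤ c})) :=
    (hK.prod (isCompact_stdSimplex ℝ A)).inter_right <| (isClosed_setOf_mem_BR v hπ).inter <|
      isClosed_le ((continuous_pay u).comp (continuous_snd.prodMk continuous_const))
        continuous_const
  convert (hgraph.image continuous_fst).isClosed using 1
  ext x
  constructor
  · rintro ⟨hx, α, hα, hpay⟩
    exact ⟨(x, α), ⟨⟨hx, hα.1⟩, hα, hpay⟩, rfl⟩
  · rintro ⟨⟨x, α⟩, ⟨⟨hx, -⟩, hα, hpay⟩, rfl⟩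
    exact ⟨hx, α, hα, hpay⟩

def Punishes (α : A → ℝ) (π : Ω → ℝ) : Prop :=
  pay u α π ≤ ubar u v π

variable {u v} {ρ ρ' : Ω → ℝ}

lemma punishes_or_punishes_of_mem_BR {t : ℝ} (ht : t ∈ Set.Icc (0 : ℝ) 1)
    (hseg : ubar u v (t • ρ + (1 - t) • ρ') ≤ t * ubar u v ρ + (1 - t) * ubar u v ρ')
    {α : A → ℝ} (hα : α ∈ BR v (t • ρ + (1 - t) • ρ')) :
    Punishes u v α ρ ∨ Punishes u v α ρ' :=
  le_or_le_of_convex_comb_le ht <| pay_add_smul_right u α t (1 - t) ρ ρ' ▸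
    (pay_le_ubar u v hα).trans hseg

lemma exists_mem_BR_punishes_and_punishes {t : ℝ} (ht : t ∈ Set.Icc (0 : ℝ) 1)
    (hseg : ubar u v (t • ρ + (1 - t) • ρ') ≤ t * ubar u v ρ + (1 - t) * ubar u v ρ')
    {α β : A → ℝ} (hα : α ∈ BR v (t • ρ + (1 - t) • ρ')) (hαρ : Punishes u v α ρ)
    (hβ : β ∈ BR v (t • ρ + (1 - t) • ρ')) (hβρ' : Punishes u v β ρ') :
    ∃ γ ∈ BR v (t • ρ + (1 - t) • ρ'), Punishes u v γ ρ ∧ Punishes u v γ ρ' := by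
  let γ : ℝ → A → ℝ := fun θ => θ • α + (1 - θ) • β
  have hγ : ∀ θ ∈ Set.Icc (0 : ℝ) 1, γ θ ∈ BR v (t • ρ + (1 - t) • ρ') := fun θ hθ =>
    convex_BR v _ hα hβ hθ.1 (sub_nonneg.mpr hθ.2) (add_sub_cancel θ 1)
  have hclosed : ∀ σ, IsClosed {θ | Punishes u v (γ θ) σ} := fun σ =>
    isClosed_le (by simp only [γ, pay_add_smul_left]; fun_prop) continuous_const
  obtain ⟨θ, hθ, hθρ, hθρ'⟩ := exists_mem_Icc_mem_and_mem_of_Icc_subset_union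
    (hclosed ρ) (hclosed ρ') (fun θ hθ => punishes_or_punishes_of_mem_BR ht hseg (hγ θ hθ))
    (by simpa [γ] using hαρ) (by simpa [γ] using hβρ')
  exact ⟨γ θ, hγ θ hθ, hθρ, hθρ'⟩

lemma exists_mem_Icc_exists_punishes_and_exists_punishes [Nonempty A]
    (hseg : ∀ t ∈ Set.Icc (0 : ℝ) 1,
      ubar u v (t • ρ + (1 - t) • ρ') ≤ t * ubar u v ρ + (1 - t) * ubar u v ρ') :
    ∃ t ∈ Set.Icc (0 : ℝ) 1,
      (∃ α ∈ BR v (t • ρ + (1 - t) • ρ'), Punishes u v α ρ) ∧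
        ∃ β ∈ BR v (t • ρ + (1 - t) • ρ'), Punishes u v β ρ' := by
  have hπ : Continuous fun t : ℝ => t • ρ + (1 - t) • ρ' := by fun_prop
  have hclosed : ∀ σ, IsClosed
      {t : ℝ | t ∈ Set.Icc 0 1 ∧ ∃ α ∈ BR v (t • ρ + (1 - t) • ρ'), Punishes u v α σ} := fun σ =>
    isClosed_setOf_exists_mem_BR_pay_le u v isCompact_Icc hπ σ (ubar u v σ)
  have hcover : Set.Icc (0 : ℝ) 1 ⊆
      {t | t ∈ Set.Icc 0 1 ∧ ∃ α ∈ BR v (t • ρ + (1 - t) • ρ'), Punishes u v α ρ} ∪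
        {t | t ∈ Set.Icc 0 1 ∧ ∃ α ∈ BR v (t • ρ + (1 - t) • ρ'), Punishes u v α ρ'} :=
    fun t ht => by
      obtain ⟨β, hβ⟩ := BR_nonempty v (t • ρ + (1 - t) • ρ')
      exact (punishes_or_punishes_of_mem_BR ht (hseg t ht) hβ).imp
        (fun h => ⟨ht, β, hβ, h⟩) fun h => ⟨ht, β, hβ, h⟩
  have hend : ∀ σ, ∃ β ∈ BR v σ, Punishes u v β σ := fun σ =>
    (BR_nonempty v σ).imp fun β hβ => ⟨hβ, pay_le_ubar u v hβ⟩
  obtain ⟨t, ht, ⟨-, hρ⟩, ⟨-, hρ'⟩⟩ := exists_mem_Icc_mem_and_mem_of_Icc_subset_union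
    (hclosed ρ) (hclosed ρ') hcover
    ⟨⟨zero_le_one, le_rfl⟩, by simpa using hend ρ⟩ ⟨⟨le_rfl, zero_le_one⟩, by simpa using hend ρ'⟩
  exact ⟨t, ht, hρ, hρ'⟩

end Punishment

theorem pairwise_uniform_punishment_general {Ω A S : Type*} [Fintype Ω]
    [Fintype A] [Nonempty A] [Fintype S]
    (u v : A → Ω → ℝ) (prior : Ω → ℝ)
    (lam : S → ℝ) (p : S → Ω → ℝ) (hopt : IsOptimalSplitting u v lam p prior) :
    ∀ s s' : S, ∃ t ∈ Set.Icc (0 : ℝ) 1,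
      ∃ α ∈ BR v (fun ω => t * p s ω + (1 - t) * p s' ω),
        pay u α (p s) ≤ ubar u v (p s) ∧ pay u α (p s') ≤ ubar u v (p s') := by
  intro s s'
  have hseg := fun t (ht : t ∈ Set.Icc (0 : ℝ) 1) => hopt.ubar_segment_le s s' ht
  obtain ⟨t, ht, ⟨α, hα, hαs⟩, β, hβ, hβs'⟩ :=
    exists_mem_Icc_exists_punishes_and_exists_punishes hseg
  obtain ⟨γ, hγ, hγs, hγs'⟩ :=
    exists_mem_BR_punishes_and_punishes ht (hseg t ht) hα hαs hβ hβs'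
  exact ⟨t, ht, γ, hγ, hγs, hγs'⟩

/-- Remark 6: pairwise uniform punishment. -/
theorem pairwise_uniform_punishment {Ω A S : Type*} [Fintype Ω] [Nonempty Ω]
    [Fintype A] [Nonempty A] [Fintype S] [Nonempty S]
    (u v : A → Ω → ℝ) (prior : Ω → ℝ) (hprior : prior ∈ stdSimplex ℝ Ω)
    (lam : S → ℝ) (p : S → Ω → ℝ) (hopt : IsOptimalSplitting u v lam p prior) :
    ∀ s s' : S, ∃ t ∈ Set.Icc (0 : ℝ) 1,
      ∃ α ∈ BR v (fun ω => t * p s ω + (1 - t) * p s' ω),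
        pay u α (p s) ≤ ubar u v (p s) ∧ pay u α (p s') ≤ ubar u v (p s') :=
  pairwise_uniform_punishment_general u v prior lam p hopt
end

section
/- [Remark 5, implication (i)] Assume there are no redundant actions for the decision-maker. Then for every a ∈ Â, the set BR⁻¹(a) := {π ∈ Δ(Ω) : v(a,π) = v̄(π)} has full dimension: its affine span equals the affine span of Δ(Ω) (i.e., it has dimension |Ω| − 1 as a subset of the simplex). -/
open Finset

variable {Ω A : Type*}

/-- Beliefs at which `a` is optimal for the decision-maker. -/
def BRinv [Fintype Ω] [Fintype A] (v : A → Ω → ℝ) (a : A) : Set (Ω → ℝ) :=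
  {π ∈ stdSimplex ℝ Ω | payP v a π = vbar v π}

/-- No redundant actions for the decision-maker. -/
def NoRedundantDM [Fintype Ω] [Fintype A] (v : A → Ω → ℝ) : Prop :=
  ∀ B : Set A, B.Nonempty → B ⊂ Ahat v →
    ∃ π ∈ stdSimplex ℝ Ω, ∀ a ∈ B, payP v a π < vbar v π

/-- No redundant actions for the experts. -/
def NoRedundantExperts [Fintype Ω] (u : A → Ω → ℝ) : Prop :=
  ∀ a a' : A, a ≠ a' → ∃ ω, u a ω ≠ u a' ω

/-- The expert value function `ū` is concave on the simplex. -/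
def UbarConcave [Fintype Ω] [Fintype A] (u v : A → Ω → ℝ) : Prop :=
  ∀ π ∈ stdSimplex ℝ Ω, ∀ π' ∈ stdSimplex ℝ Ω, ∀ t ∈ Set.Icc (0 : ℝ) 1,
    t * ubar u v π + (1 - t) * ubar u v π' ≤ ubar u v (fun ω => t * π ω + (1 - t) * π' ω)

/-!
Since no action is redundant, each `a ∈ Â` is the unique best reply at some belief `π₀`
(otherwise `Â \ {a}` would be a redundant set), and by continuity of the payoffs `a` remains a
best reply on a neighbourhood of `π₀`. A convex set has the same affine span as its intersection
with a neighbourhood of one of its points `x`: every point `y` of the set lies on the line through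
`x` and a point of the segment `[x, y]` close to `x`.
-/

open Filter Topology AffineMap

theorem AffineSubspace.mem_of_lineMap_mem {k V P : Type*} [Field k] [AddCommGroup V] [Module k V]
    [AddTorsor V P] {Q : AffineSubspace k P} {x y : P} {ε : k} (hε : ε ≠ 0) (hx : x ∈ Q)
    (hxy : lineMap x y ε ∈ Q) : y ∈ Q := by
  have hy : lineMap x (lineMap x y ε) ε⁻¹ = y := by
    rw [lineMap_lineMap_right, inv_mul_cancel₀ hε, lineMap_apply_one]
  exact hy ▸ lineMap_mem ε⁻¹ hx hxy

theorem Convex.affineSpan_inter_nhds {E : Type*} [AddCommGroup E] [Module ℝ E]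
    [TopologicalSpace E] [IsTopologicalAddGroup E] [ContinuousSMul ℝ E] {t U : Set E} {x : E}
    (ht : Convex ℝ t) (hx : x ∈ t) (hU : U ∈ 𝓝 x) : affineSpan ℝ (t ∩ U) = affineSpan ℝ t := by
  refine le_antisymm (affineSpan_mono ℝ Set.inter_subset_left) (affineSpan_le.2 fun y hy => ?_)
  have hnear : ∀ᶠ ε in 𝓝 (0 : ℝ), lineMap x y ε ∈ U :=
    (lineMap_continuous.tendsto' 0 x (lineMap_apply_zero x y)).eventually_mem hU
  obtain ⟨ε, hε0, hεU, hε1⟩ := (hnear.and (eventually_le_nhds zero_lt_one)).exists_gt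
  have hεt : lineMap x y ε ∈ t := ht.lineMap_mem hx hy ⟨hε0.le, hε1⟩
  exact AffineSubspace.mem_of_lineMap_mem hε0.ne' (subset_affineSpan ℝ _ ⟨hx, mem_of_mem_nhds hU⟩)
    (subset_affineSpan ℝ _ ⟨hεt, hεU⟩)

section BestReply

variable [Fintype Ω]

theorem continuous_payP (u : A → Ω → ℝ) (a : A) : Continuous (payP u a) := by
  unfold payP
  fun_prop

variable [Fintype A]

theorem payP_le_vbar (v : A → Ω → ℝ) (a : A) (π : Ω → ℝ) : payP v a π ≤ vbar v π :=
  le_ciSup (Set.finite_range fun a => payP v a π).bddAbove a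

variable [Nonempty A]

theorem mem_br_iff_payP_eq_vbar {v : A → Ω → ℝ} {a : A} {π : Ω → ℝ} :
    a ∈ br v π ↔ payP v a π = vbar v π :=
  ⟨fun h => le_antisymm (payP_le_vbar v a π) (ciSup_le h),
    fun h a' => h ▸ payP_le_vbar v a' π⟩

theorem br_nonempty (v : A → Ω → ℝ) (π : Ω → ℝ) : (br v π).Nonempty :=
  Finite.exists_max fun a => payP v a π

theorem payP_lt_of_br_subset_singleton {v : A → Ω → ℝ} {a a' : A} {π : Ω → ℝ}
    (h : br v π ⊆ {a}) (ha' : a' ≠ a) : payP v a' π < payP v a π := by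
  obtain ⟨b, hb⟩ := br_nonempty v π
  obtain rfl : b = a := h hb
  obtain ⟨c, hc⟩ : ∃ c, payP v a' π < payP v c π := by
    simpa [br] using fun h' => ha' (h h')
  exact hc.trans_le (hb c)

theorem eventually_mem_br_of_br_subset_singleton {v : A → Ω → ℝ} {a : A} {π₀ : Ω → ℝ}
    (h : br v π₀ ⊆ {a}) : ∀ᶠ π in 𝓝 π₀, a ∈ br v π := by
  refine eventually_all.2 fun a' => ?_
  rcases eq_or_ne a' a with rfl | ha'
  · exact Eventually.of_forall fun _ => le_rfl
  · exact ((continuous_payP v a').continuousAt.eventually_lt (continuous_payP v a).continuousAt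
      (payP_lt_of_br_subset_singleton h ha')).mono fun _ => le_of_lt

theorem NoRedundantDM.exists_br_subset_singleton {v : A → Ω → ℝ} (hnr : NoRedundantDM v) {a : A}
    (ha : a ∈ Ahat v) : ∃ π ∈ stdSimplex ℝ Ω, br v π ⊆ {a} := by
  by_cases hothers : (Ahat v \ {a}).Nonempty
  · obtain ⟨π, hπ, hlt⟩ := hnr _ hothers (Set.sdiff_singleton_ssubset.2 ha)
    refine ⟨π, hπ, fun b hb => ?_⟩
    by_contra hba
    exact (hlt b ⟨⟨π, hπ, hb⟩, hba⟩).ne (mem_br_iff_payP_eq_vbar.1 hb)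
  · obtain ⟨π, hπ, -⟩ := ha
    refine ⟨π, hπ, fun b hb => ?_⟩
    by_contra hba
    exact hothers ⟨b, ⟨π, hπ, hb⟩, hba⟩

end BestReply

theorem BRinv_full_dimensional_general {Ω A : Type*} [Fintype Ω] [Fintype A] [Nonempty A]
    (v : A → Ω → ℝ) (hnr : NoRedundantDM v) :
    ∀ a ∈ Ahat v, affineSpan ℝ (BRinv v a) = affineSpan ℝ (stdSimplex ℝ Ω) := by
  intro a ha
  obtain ⟨π₀, hπ₀, hunique⟩ := hnr.exists_br_subset_singleton ha
  have hsub : stdSimplex ℝ Ω ∩ {π | a ∈ br v π} ⊆ BRinv v a :=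
    fun π ⟨hπ, hbr⟩ => ⟨hπ, mem_br_iff_payP_eq_vbar.1 hbr⟩
  refine le_antisymm (affineSpan_mono ℝ fun π hπ => hπ.1) ?_
  rw [← (convex_stdSimplex ℝ Ω).affineSpan_inter_nhds hπ₀
    (eventually_mem_br_of_br_subset_singleton hunique)]
  exact affineSpan_mono ℝ hsub

/-- Remark 5, implication (i): each `BR⁻¹(a)`, `a ∈ Â`, has full dimension. -/
theorem BRinv_full_dimensional {Ω A : Type*} [Fintype Ω] [Nonempty Ω] [Fintype A] [Nonempty A]
    (u v : A → Ω → ℝ) (hnr : NoRedundantDM v) :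
    ∀ a ∈ Ahat v, affineSpan ℝ (BRinv v a) = affineSpan ℝ (stdSimplex ℝ Ω) :=
  BRinv_full_dimensional_general v hnr
end

section
/- [Second claim in the proof of Proposition 1] Let (λ_s, π_s)_{s∈S} be an optimal splitting of the prior π° ∈ Δ(Ω) satisfying Σ_{s∈S} λ_s v̄(π_s) = v̄(π°) (the decision-maker does not benefit) and Σ_{s∈S} λ_s ū(π_s) > ū(π°) (the experts strictly benefit from persuasion). Then for every a ∈ br(π°) there exists s ∈ S with u(a, π_s) < ū(π_s). -/
open Finset

variable {Ω A : Type*}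

/-! If `a ∈ br(π°)` were weakly optimal for the experts at every posterior `π_s`, then, since
`π ↦ u(a, π)` is affine and `a` is a best reply at the prior,
`Σ λ_s ū(π_s) ≤ Σ λ_s u(a, π_s) = u(a, π°) ≤ ū(π°)`,
so the experts would not benefit from persuasion. -/

section Payoffs

variable [Fintype Ω] [Fintype A]

lemma pay_eq_sum_mul_payP (u : A → Ω → ℝ) (α : A → ℝ) (π : Ω → ℝ) :
    pay u α π = ∑ a, α a * payP u a π := by
  unfold pay payP
  refine sum_congr rfl fun a _ => ?_
  rw [mul_sum]
  exact sum_congr rfl fun ω _ => by ring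

lemma pay_single [DecidableEq A] (u : A → Ω → ℝ) (a : A) (π : Ω → ℝ) :
    pay u (Pi.single a 1) π = payP u a π := by
  rw [pay_eq_sum_mul_payP, sum_eq_single a (fun b _ hb => by simp [hb]) (by simp)]
  simp

lemma pay_le_of_forall_payP_le {u : A → Ω → ℝ} {α : A → ℝ} {π : Ω → ℝ} {c : ℝ}
    (hα : α ∈ stdSimplex ℝ A) (hc : ∀ a, payP u a π ≤ c) : pay u α π ≤ c :=
  calc pay u α π = ∑ a, α a * payP u a π := pay_eq_sum_mul_payP u α π
    _ ≤ ∑ a, α a * c := sum_le_sum fun a _ => mul_le_mul_of_nonneg_left (hc a) (hα.1 a)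
    _ = c := by rw [← sum_mul, hα.2, one_mul]

lemma bddAbove_pay_image_stdSimplex (u : A → Ω → ℝ) (π : Ω → ℝ) :
    BddAbove ((fun α => pay u α π) '' stdSimplex ℝ A) := by
  refine ⟨⨆ b, payP u b π, ?_⟩
  rintro _ ⟨α, hα, rfl⟩
  exact pay_le_of_forall_payP_le hα fun a =>
    le_ciSup (f := fun b => payP u b π) (Set.finite_range _).bddAbove a

lemma single_mem_BR_of_mem_br [DecidableEq A] {v : A → Ω → ℝ} {π : Ω → ℝ} {a : A}
    (ha : a ∈ br v π) : Pi.single a 1 ∈ BR v π :=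
  ⟨single_mem_stdSimplex ℝ a, fun _ hα' =>
    (pay_single v a π).symm ▸ pay_le_of_forall_payP_le hα' ha⟩

lemma payP_le_ubar_of_mem_br (u : A → Ω → ℝ) {v : A → Ω → ℝ} {π : Ω → ℝ} {a : A}
    (ha : a ∈ br v π) : payP u a π ≤ ubar u v π := by
  classical
  rw [← pay_single u a π]
  exact le_csSup ((bddAbove_pay_image_stdSimplex u π).mono (Set.image_mono fun _ h => h.1))
    ⟨_, single_mem_BR_of_mem_br ha, rfl⟩

end Payoffs

lemma payP_eq_sum_of_barycenter [Fintype Ω] {S : Type*} [Fintype S] (u : A → Ω → ℝ) (a : A)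
    {lam : S → ℝ} {p : S → Ω → ℝ} {prior : Ω → ℝ}
    (hsum : ∀ ω, ∑ s, lam s * p s ω = prior ω) :
    payP u a prior = ∑ s, lam s * payP u a (p s) := by
  unfold payP
  simp_rw [← hsum, sum_mul, mul_sum, mul_assoc]
  exact sum_comm

theorem prior_best_reply_strictly_suboptimal_general {Ω A S : Type*} [Fintype Ω]
    [Fintype A] [Fintype S]
    (u v : A → Ω → ℝ) (prior : Ω → ℝ)
    (lam : S → ℝ) (p : S → Ω → ℝ) (hopt : IsOptimalSplitting u v lam p prior)
    (hexp : ubar u v prior < ∑ s, lam s * ubar u v (p s)) :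
    ∀ a ∈ br v prior, ∃ s, payP u a (p s) < ubar u v (p s) := by
  intro a ha
  by_contra! hweak
  obtain ⟨⟨hpos, -, -, hsum⟩, -⟩ := hopt
  have : ∑ s, lam s * ubar u v (p s) ≤ ubar u v prior :=
    calc ∑ s, lam s * ubar u v (p s) ≤ ∑ s, lam s * payP u a (p s) :=
          sum_le_sum fun s _ => mul_le_mul_of_nonneg_left (hweak s) (hpos s).le
      _ = payP u a prior := (payP_eq_sum_of_barycenter u a hsum).symm
      _ ≤ ubar u v prior := payP_le_ubar_of_mem_br u ha
  exact hexp.not_ge this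

/-- Second claim in the proof of Proposition 1. -/
theorem prior_best_reply_strictly_suboptimal {Ω A S : Type*} [Fintype Ω] [Nonempty Ω]
    [Fintype A] [Nonempty A] [Fintype S] [Nonempty S]
    (u v : A → Ω → ℝ) (prior : Ω → ℝ) (hprior : prior ∈ stdSimplex ℝ Ω)
    (lam : S → ℝ) (p : S → Ω → ℝ) (hopt : IsOptimalSplitting u v lam p prior)
    (hdm : (∑ s, lam s * vbar v (p s)) = vbar v prior)
    (hexp : ubar u v prior < ∑ s, lam s * ubar u v (p s)) :
    ∀ a ∈ br v prior, ∃ s, payP u a (p s) < ubar u v (p s) :=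
  prior_best_reply_strictly_suboptimal_general u v prior lam p hopt hexp
end
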